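/- Let (x^k) be a proximal gradient sequence whose stepsizes are generated by the long-BB-safeguarded update γ_{k+1} = min{ γ_k √(1 + γ_k/γ_{k−1}), γ_k / √(2 [γ_k² L_k² − γ_k ℓ_k]_+), 1/ℓ_k }, and let k ≥ 1 be such that ⟨y^k, s^k⟩ > 0. Then at least one of the following holds: γ_{k+1} ≥ γ_k; or γ_k ≥ 3/(2 c_k); or γ_k ≥ γ_{k+1} = 1/ℓ_k. -/

import Mathlib

open scoped RealInnerProductSpace BigOperators
open Filter

noncomputable section

/-- Euclidean space `ℝ^n`. -/
abbrev En (n : ℕ) : Type := EuclideanSpace ℝ (Fin n)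

/-- Convexity for an extended-real-valued function. -/
def ERConvex {n : ℕ} (g : En n → EReal) : Prop :=
  ∀ x y : En n, ∀ a b : ℝ, 0 ≤ a → 0 ≤ b → a + b = 1 →
    g (a • x + b • y) ≤ (a : EReal) * g x + (b : EReal) * g y

/-- Properness for an extended-real-valued function: nowhere `⊥`, somewhere finite. -/
def ERProper {n : ℕ} (g : En n → EReal) : Prop :=
  (∀ x, g x ≠ ⊥) ∧ (∃ x, g x ≠ ⊤)

/-- `p = prox_{γ g}(u)`: `p` minimizes `w ↦ g w + 1/(2γ)‖w − u‖²`. -/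
def IsProx {n : ℕ} (g : En n → EReal) (γ : ℝ) (u p : En n) : Prop :=
  ∀ w : En n,
    g p + ((1 / (2 * γ) * ‖p - u‖ ^ 2 : ℝ) : EReal)
      ≤ g w + ((1 / (2 * γ) * ‖w - u‖ ^ 2 : ℝ) : EReal)

/-- The composite objective `φ = f + g`. -/
def phi {n : ℕ} (f : En n → ℝ) (g : En n → EReal) (z : En n) : EReal :=
  (f z : EReal) + g z

/-- `p` is a minimizer of `φ = f + g`. -/
def IsArgmin {n : ℕ} (f : En n → ℝ) (g : En n → EReal) (p : En n) : Prop :=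
  ∀ z : En n, phi f g p ≤ phi f g z

/-- `(x^k)` is a proximal gradient sequence with stepsizes `(γ_k)` and gradient `f'`. -/
def PGSeq {n : ℕ} (f' : En n → En n) (g : En n → EReal)
    (γ : ℕ → ℝ) (x : ℕ → En n) : Prop :=
  ∀ k : ℕ, IsProx g (γ (k + 1)) (x k - γ (k + 1) • f' (x k)) (x (k + 1))

/-- `s^k = x^k − x^{k−1}`. -/
def sk {n : ℕ} (x : ℕ → En n) (k : ℕ) : En n := x k - x (k - 1)

/-- `y^k = ∇f(x^k) − ∇f(x^{k−1})`. -/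
def yk {n : ℕ} (f' : En n → En n) (x : ℕ → En n) (k : ℕ) : En n :=
  f' (x k) - f' (x (k - 1))

/-- `ℓ_k = ⟨y^k, s^k⟩ / ‖s^k‖²`. -/
def ellk {n : ℕ} (f' : En n → En n) (x : ℕ → En n) (k : ℕ) : ℝ :=
  ⟪yk f' x k, sk x k⟫ / ‖sk x k‖ ^ 2

/-- `L_k = ‖y^k‖ / ‖s^k‖`. -/
def Lk {n : ℕ} (f' : En n → En n) (x : ℕ → En n) (k : ℕ) : ℝ :=
  ‖yk f' x k‖ / ‖sk x k‖

/-- `c_k = ‖y^k‖² / ⟨y^k, s^k⟩`. -/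
def ck {n : ℕ} (f' : En n → En n) (x : ℕ → En n) (k : ℕ) : ℝ :=
  ‖yk f' x k‖ ^ 2 / ⟪yk f' x k, sk x k⟫

/-- `P_k = φ(x^k) − min φ`, as a real number (`x*` a minimizer of `φ`). -/
def Pk {n : ℕ} (f : En n → ℝ) (g : En n → EReal) (xstar : En n)
    (x : ℕ → En n) (k : ℕ) : ℝ :=
  (phi f g (x k)).toReal - (phi f g xstar).toReal

/-- `P_k^min = min_{i ≤ k} P_i`. -/
def PkMin {n : ℕ} (f : En n → ℝ) (g : En n → EReal) (xstar : En n)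
    (x : ℕ → En n) (k : ℕ) : ℝ :=
  (Finset.range (k + 1)).inf' ⟨0, Finset.mem_range.mpr (Nat.succ_pos k)⟩ (Pk f g xstar x)

/-- `U_k^r(x*) = ½‖x^k − x*‖² + ½‖x^k − x^{k−1}‖² + γ_k (1 + r ρ_k) P_{k−1}`. -/
def Uk {n : ℕ} (f : En n → ℝ) (g : En n → EReal) (r : ℝ) (xstar : En n)
    (γ : ℕ → ℝ) (x : ℕ → En n) (k : ℕ) : ℝ :=
  1 / 2 * ‖x k - xstar‖ ^ 2 + 1 / 2 * ‖x k - x (k - 1)‖ ^ 2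
    + γ k * (1 + r * (γ k / γ (k - 1))) * Pk f g xstar x (k - 1)

/-- Property (p1): `1 + r ρ_k − r ρ_{k+1}² ≥ 0` for all `k ≥ 1`. -/
def P1 (γ : ℕ → ℝ) (r : ℝ) : Prop :=
  ∀ k : ℕ, 1 ≤ k →
    0 ≤ 1 + r * (γ k / γ (k - 1)) - r * (γ (k + 1) / γ k) ^ 2

/-- Property (p2): `1/2 − ρ_{k+1}² [γ_k² L_k² − (2−r) γ_k ℓ_k + 1 − r] ≥ 0` for all `k ≥ 1`. -/
def P2 {n : ℕ} (f' : En n → En n) (x : ℕ → En n) (γ : ℕ → ℝ) (r : ℝ) : Prop :=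
  ∀ k : ℕ, 1 ≤ k →
    0 ≤ 1 / 2 - (γ (k + 1) / γ k) ^ 2 *
      ((γ k) ^ 2 * (Lk f' x k) ^ 2 - (2 - r) * γ k * ellk f' x k + 1 - r)

/-- Property (p3): for every `k ≥ 1`, either `γ_{k+1} ≥ γ_k` or there is
`1 ≤ j ≤ k` with `min{γ_j, γ_{k+1}} ≥ λ_min ‖x^j − x^{j−1}‖^{1−ν}`. -/
def P3 {n : ℕ} (x : ℕ → En n) (γ : ℕ → ℝ) (ν lammin : ℝ) : Prop :=
  ∀ k : ℕ, 1 ≤ k →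
    γ k ≤ γ (k + 1) ∨
      ∃ j : ℕ, 1 ≤ j ∧ j ≤ k ∧
        lammin * ‖x j - x (j - 1)‖ ^ (1 - ν) ≤ min (γ j) (γ (k + 1))

/-- `L` is a `ν`-Hölder modulus for `f'` on `Ω`. -/
def HolderOn {n : ℕ} (f' : En n → En n) (ν L : ℝ) (Ω : Set (En n)) : Prop :=
  ∀ x ∈ Ω, ∀ y ∈ Ω, ‖f' x - f' y‖ ≤ L * ‖x - y‖ ^ ν

/-- `f'` is locally `ν`-Hölder continuous. -/
def LocallyHolder {n : ℕ} (f' : En n → En n) (ν : ℝ) : Prop :=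
  ∀ Ω : Set (En n), IsCompact Ω → Convex ℝ Ω → ∃ L > 0, HolderOn f' ν L Ω

/-- First term in the adaPG^{r,r/2} stepsize update. -/
def adaT1 (γ : ℕ → ℝ) (r : ℝ) (k : ℕ) : ℝ :=
  γ k * Real.sqrt (1 / r + γ k / γ (k - 1))

/-- The bracket `γ_k² L_k² − (2 − r) γ_k ℓ_k + 1 − r` in the adaPG^{r,r/2} update. -/
def adaBrk {n : ℕ} (f' : En n → En n) (x : ℕ → En n) (γ : ℕ → ℝ) (r : ℝ) (k : ℕ) : ℝ :=
  (γ k) ^ 2 * (Lk f' x k) ^ 2 - (2 - r) * γ k * ellk f' x k + 1 - r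

/-- The adaPG^{r,r/2} stepsize: the minimum of the two terms, the second
being `+∞` (inactive) when the bracket is nonpositive. -/
def adaSafe {n : ℕ} (f' : En n → En n) (x : ℕ → En n) (γ : ℕ → ℝ) (r : ℝ) (k : ℕ) : ℝ :=
  if 0 < adaBrk f' x γ r k then
    min (adaT1 γ r k) (γ k / Real.sqrt (2 * adaBrk f' x γ r k))
  else adaT1 γ r k

/-- The stepsizes are generated by the adaPG^{r,r/2} update (for `k ≥ 1`). -/
def AdaPGUpdate {n : ℕ} (f' : En n → En n) (x : ℕ → En n) (γ : ℕ → ℝ) (r : ℝ) : Prop :=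
  ∀ k : ℕ, 1 ≤ k → γ (k + 1) = adaSafe f' x γ r k

/-- `λ_k = γ_k / ‖x^k − x^{k−1}‖^{1−ν}`. -/
def lamk {n : ℕ} (x : ℕ → En n) (γ : ℕ → ℝ) (ν : ℝ) (k : ℕ) : ℝ :=
  γ k / ‖x k - x (k - 1)‖ ^ (1 - ν)

/-! With `a = γ_k ℓ_k` and `t = γ_k c_k`, the identity `ℓ_k c_k = L_k²` turns the safeguard bracket
(for `r = 1`) into `a (t - 1)`. Suppose `γ_{k+1} < γ_k` and `γ_{k+1} ≠ 1/ℓ_k`. Since the first term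
`γ_k √(1 + γ_k/γ_{k-1})` is at least `γ_k`, the step must be `γ_k / √(2 a (t - 1))`, and it lies
below both `γ_k` and `1/ℓ_k`. Hence `2a(t - 1) > 1` and `2a(t - 1) > a²`, so
`4a(t - 1) > 1 + a² ≥ 2a`, i.e. `t > 3/2`. -/

theorem one_lt_of_div_sqrt_lt_self {γ b : ℝ} (hγ : 0 < γ) (hb : 0 < b) (h : γ / √b < γ) :
    1 < b := by
  have hsqrt : 1 < √b := by
    rw [div_lt_iff₀ (Real.sqrt_pos.mpr hb)] at h
    exact (lt_mul_iff_one_lt_right hγ).mp h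
  simpa using (Real.lt_sqrt zero_le_one).mp hsqrt

theorem sq_mul_lt_of_div_sqrt_lt_inv {γ ℓ b : ℝ} (hγ : 0 < γ) (hℓ : 0 < ℓ) (hb : 0 < b)
    (h : γ / √b < 1 / ℓ) : (γ * ℓ) ^ 2 < b := by
  rw [div_lt_div_iff₀ (Real.sqrt_pos.mpr hb) hℓ, one_mul] at h
  exact (Real.lt_sqrt (by positivity)).mp h

theorem three_halves_lt_of_safeguard {a t : ℝ} (ha : 0 < a) (hone : 1 < 2 * (a * (t - 1)))
    (hsq : a ^ 2 < 2 * (a * (t - 1))) : 3 / 2 < t := by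
  have hpos : 0 < a * (2 * t - 3) := by nlinarith [sq_nonneg (a - 1)]
  linarith [pos_of_mul_pos_right hpos ha.le]

theorem le_adaT1 {γ : ℕ → ℝ} {r : ℝ} {k : ℕ} (hr₀ : 0 < r) (hr₁ : r ≤ 1)
    (hγk : 0 ≤ γ k) (hγk' : 0 ≤ γ (k - 1)) : γ k ≤ adaT1 γ r k := by
  have hρ : 0 ≤ γ k / γ (k - 1) := div_nonneg hγk hγk'
  have hone : 1 ≤ √(1 / r + γ k / γ (k - 1)) := by
    rw [Real.one_le_sqrt]
    linarith [(one_le_div hr₀).mpr hr₁]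
  exact le_mul_of_one_le_right hγk hone

theorem adaSafe_eq_of_lt_self {n : ℕ} {f' : En n → En n} {x : ℕ → En n} {γ : ℕ → ℝ} {r : ℝ}
    {k : ℕ} (hT : γ k ≤ adaT1 γ r k) (h : adaSafe f' x γ r k < γ k) :
    0 < adaBrk f' x γ r k ∧
      adaSafe f' x γ r k = γ k / √(2 * adaBrk f' x γ r k) := by
  unfold adaSafe at h ⊢
  split_ifs at h ⊢ with hB
  · refine ⟨hB, min_eq_right ?_⟩
    have hq : γ k / √(2 * adaBrk f' x γ r k) < γ k :=
      (min_lt_iff.mp h).resolve_left hT.not_gt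
    exact (hq.trans_le hT).le
  · exact absurd h hT.not_gt

theorem ck_mul_ellk {n : ℕ} {f' : En n → En n} {x : ℕ → En n} {k : ℕ}
    (h : ⟪yk f' x k, sk x k⟫ ≠ 0) : ck f' x k * ellk f' x k = Lk f' x k ^ 2 := by
  rw [ck, ellk, Lk, div_pow, div_mul_div_comm, mul_comm (‖yk f' x k‖ ^ 2),
    mul_div_mul_left _ _ h]

theorem adaBrk_one_eq {n : ℕ} {f' : En n → En n} {x : ℕ → En n} {γ : ℕ → ℝ} {k : ℕ}
    (h : ⟪yk f' x k, sk x k⟫ ≠ 0) :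
    adaBrk f' x γ 1 k = γ k * ellk f' x k * (γ k * ck f' x k - 1) := by
  rw [adaBrk, ← ck_mul_ellk h]
  ring

theorem statement_15_general {n : ℕ} (f' : En n → En n)
    (γ : ℕ → ℝ) (hγ : ∀ k, 0 < γ k)
    (x : ℕ → En n)
    (hupd : ∀ k : ℕ, 1 ≤ k →
      γ (k + 1) = min (adaSafe f' x γ 1 k) (1 / ellk f' x k))
    (k : ℕ) (hk : 1 ≤ k) (hys : 0 < ⟪yk f' x k, sk x k⟫) :
    γ k ≤ γ (k + 1) ∨ 3 / (2 * ck f' x k) ≤ γ k ∨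
      (γ (k + 1) ≤ γ k ∧ γ (k + 1) = 1 / ellk f' x k) := by
  have hs : sk x k ≠ 0 := by rintro hs; simp [hs] at hys
  have hy : yk f' x k ≠ 0 := by rintro hy; simp [hy] at hys
  have hℓ : 0 < ellk f' x k := div_pos hys (by positivity)
  have hc : 0 < ck f' x k := div_pos (by positivity) hys
  rcases le_or_gt (γ k) (γ (k + 1)) with hinc | hdec
  · exact Or.inl hinc
  rcases le_or_gt (1 / ellk f' x k) (adaSafe f' x γ 1 k) with hBB | hsafe
  · exact Or.inr (Or.inr ⟨hdec.le, by rw [hupd k hk, min_eq_right hBB]⟩)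
  rw [hupd k hk, min_eq_left hsafe.le] at hdec
  obtain ⟨hB, hstep⟩ := adaSafe_eq_of_lt_self
    (le_adaT1 one_pos le_rfl (hγ k).le (hγ (k - 1)).le) hdec
  rw [hstep] at hdec hsafe
  have hb : 0 < 2 * adaBrk f' x γ 1 k := by positivity
  have hone := one_lt_of_div_sqrt_lt_self (hγ k) hb hdec
  have hsq := sq_mul_lt_of_div_sqrt_lt_inv (hγ k) hℓ hb hsafe
  rw [adaBrk_one_eq hys.ne'] at hone hsq
  have ht := three_halves_lt_of_safeguard (mul_pos (hγ k) hℓ) hone hsq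
  right; left
  rw [div_le_iff₀ (by positivity)]
  linarith

/-- for the long-BB-safeguarded update
`γ_{k+1} = min{γ^safe_{k+1}, 1/ℓ_k}` (with `r = 1`), at any `k ≥ 1` with
`⟨y^k, s^k⟩ > 0`: either `γ_{k+1} ≥ γ_k`, or `γ_k ≥ 3/(2c_k)`, or
`γ_k ≥ γ_{k+1} = 1/ℓ_k`. -/
theorem statement_15 {n : ℕ} (f : En n → ℝ) (f' : En n → En n) (g : En n → EReal)
    (hfconv : ConvexOn ℝ Set.univ f)
    (hf' : ∀ z, HasGradientAt f (f' z) z)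
    (hgproper : ERProper g) (hglsc : LowerSemicontinuous g) (hgconv : ERConvex g)
    (hargmin : ∃ p, IsArgmin f g p)
    (γ : ℕ → ℝ) (hγ : ∀ k, 0 < γ k)
    (x : ℕ → En n) (hx : PGSeq f' g γ x)
    (hxne : ∀ k : ℕ, 1 ≤ k → x k ≠ x (k - 1))
    (hupd : ∀ k : ℕ, 1 ≤ k →
      γ (k + 1) = min (adaSafe f' x γ 1 k) (1 / ellk f' x k))
    (k : ℕ) (hk : 1 ≤ k) (hys : 0 < ⟪yk f' x k, sk x k⟫) :
    γ k ≤ γ (k + 1) ∨ 3 / (2 * ck f' x k) ≤ γ k ∨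
      (γ (k + 1) ≤ γ k ∧ γ (k + 1) = 1 / ellk f' x k) :=
  statement_15_general f' γ hγ x hupd k hk hys

end
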